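/- arXiv:1407.4341 — 6 statements merged into one kernel-verified Lean document; each statement's English description precedes it below -/
import Mathlib

section
/- Let k be a field, B a k-algebra, M and N B-modules, and f : M → N a B-module homomorphism. Let ⋯ → P_n →(d_n^P) P_{n−1} → ⋯ → P_0 →(d_0^P) M → 0 be a projective resolution of M, and suppose that for each n ≥ 0 there are families {e_{n,i}}_{i∈X_n} ⊆ P_n and {f_{n,i}}_{i∈X_n} ⊆ Hom_B(P_n, B) such that x = Σ_{i∈X_n} f_{n,i}(x)·e_{n,i} for all x ∈ P_n. Let ⋯ → Q_n →(d_n^Q) Q_{n−1} → ⋯ → Q_0 →(d_0^Q) N → 0 be a complex of B-modules with a weak self-homotopy {t_i}_{i ≥ −1}. Define B-linear maps f_n : P_n → Q_n by f_n(x) = Σ_{i∈X_n} f_{n,i}(x)·g_{n,i}, where g_{0,i} = t_{−1}(f(d_0^P(e_{0,i}))) and g_{n,i} = t_{n−1}(f_{n−1}(d_n^P(e_{n,i}))) for n ≥ 1. Then {f_n}_{n≥0} is a chain map lifting f, i.e. d_0^Q ∘ f_0 = f ∘ d_0^P and d_n^Q ∘ f_n = f_{n−1} ∘ d_n^P for all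 n ≥ 1. -/
/-!
Since every linear map `G` out of `P n` satisfies `G x = ∑ i, φ i x • G (e i)`, the square
`d ∘ Fₙ₊₁ = Fₙ ∘ dP` holds as soon as `d (g i) = Fₙ (dP (e i))`, where `g i = t (Fₙ (dP (e i)))`.
By induction on `n`, `Fₙ ∘ dP` takes values in cycles, since the previous square gives
`d ∘ Fₙ ∘ dP = Fₙ₋₁ ∘ dP ∘ dP = 0`; and on a cycle `y` the homotopy identity
`t (d y) + d (t y) = y` reads `d (t y) = y`.
-/

section DualFamily

variable {B : Type*} [Ring B] {P Q R : Type*}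
  [AddCommGroup P] [Module B P] [AddCommGroup Q] [Module B Q] [AddCommGroup R] [Module B R]
  {X : Type*} [Fintype X] {e : X → P} {φ : X → P →ₗ[B] B}

theorem apply_eq_of_forall_dual (hdual : ∀ x, x = ∑ i, φ i x • e i)
    {F : P → Q} {g : X → Q} (hF : ∀ x, F x = ∑ i, φ i x • g i)
    (L : Q →ₗ[B] R) (G : P →ₗ[B] R) (h : ∀ i, L (g i) = G (e i)) (x : P) :
    L (F x) = G x :=
  calc L (F x) = ∑ i, φ i x • L (g i) := by simp only [hF, map_sum, map_smul]
    _ = G (∑ i, φ i x • e i) := by simp only [h, map_sum, map_smul]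
    _ = G x := by rw [← hdual]

theorem comp_eq_of_forall_dual_of_contract_cycles {P₀ Q₀ C : Type*}
    [AddCommGroup P₀] [Module B P₀] [AddCommGroup Q₀] [Module B Q₀] [Zero C]
    (hdual : ∀ x, x = ∑ i, φ i x • e i) {F : P → Q} {g : X → Q}
    (hF : ∀ x, F x = ∑ i, φ i x • g i)
    (d : Q →ₗ[B] Q₀) (dP : P →ₗ[B] P₀) (F₀ : P₀ →ₗ[B] Q₀) (t : Q₀ → Q)
    (hg : ∀ i, g i = t (F₀ (dP (e i))))
    (δ : Q₀ → C) (hcontract : ∀ y, δ y = 0 → d (t y) = y)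
    (hcycle : ∀ x, δ (F₀ (dP x)) = 0) (x : P) :
    d (F x) = F₀ (dP x) :=
  apply_eq_of_forall_dual hdual hF d (F₀ ∘ₗ dP) (fun i => (hg i).symm ▸ hcontract _ (hcycle _)) x

end DualFamily

theorem stmt_3_general (k : Type*) [Field k] (B : Type*) [Ring B]
    (M N : Type*) [AddCommGroup M] [Module B M] [AddCommGroup N] [Module B N]
    [Module k N]
    (f : M →ₗ[B] N)
    -- the projective resolution P_* of M with the dual families
    (P : ℕ → Type*) [∀ n, AddCommGroup (P n)] [∀ n, Module B (P n)]
    (X : ℕ → Type*) [∀ n, Fintype (X n)]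
    (e : ∀ n, X n → P n) (φ : ∀ n, X n → (P n →ₗ[B] B))
    (hdual : ∀ n (x : P n), x = ∑ i : X n, φ n i x • e n i)
    (dP : ∀ n, P (n + 1) →ₗ[B] P n) (dP0 : P 0 →ₗ[B] M)
    (hP0 : dP0.comp (dP 0) = 0) (hP : ∀ n, (dP n).comp (dP (n + 1)) = 0)
    -- the complex Q_* over N with a weak self-homotopy
    (Q : ℕ → Type*) [∀ n, AddCommGroup (Q n)] [∀ n, Module B (Q n)]
    [∀ n, Module k (Q n)]
    (dQ : ∀ n, Q (n + 1) →ₗ[B] Q n) (dQ0 : Q 0 →ₗ[B] N)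
    (tneg : N →ₗ[k] Q 0) (t : ∀ n, Q n →ₗ[k] Q (n + 1))
    (htneg : ∀ x : N, dQ0 (tneg x) = x)
    (ht0 : ∀ x : Q 0, tneg (dQ0 x) + dQ 0 (t 0 x) = x)
    (ht : ∀ n (x : Q (n + 1)), t n (dQ n x) + dQ (n + 1) (t (n + 1) x) = x)
    -- the recursively constructed maps
    (g : ∀ n, X n → Q n) (F : ∀ n, P n →ₗ[B] Q n)
    (hg0 : ∀ i : X 0, g 0 i = tneg (f (dP0 (e 0 i))))
    (hg : ∀ n (i : X (n + 1)), g (n + 1) i = t n (F n (dP n (e (n + 1) i))))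
    (hF : ∀ n (x : P n), F n x = ∑ i : X n, φ n i x • g n i) :
    (∀ x : P 0, dQ0 (F 0 x) = f (dP0 x)) ∧
    (∀ n (x : P (n + 1)), dQ n (F (n + 1) x) = F n (dP n x)) := by
  have lift0 : ∀ x, dQ0 (F 0 x) = f (dP0 x) :=
    apply_eq_of_forall_dual (hdual 0) (hF 0) dQ0 (f ∘ₗ dP0) fun i => by
      rw [hg0, htneg, LinearMap.comp_apply]
  refine ⟨lift0, fun n => ?_⟩
  induction n with
  | zero =>
    refine comp_eq_of_forall_dual_of_contract_cycles (hdual 1) (hF 1) (dQ 0) (dP 0) (F 0) (t 0)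
      (hg 0) dQ0 (fun y hy => by simpa [hy] using ht0 y) fun x => ?_
    rw [lift0, ← LinearMap.comp_apply dP0, hP0, LinearMap.zero_apply, map_zero]
  | succ n ih =>
    refine comp_eq_of_forall_dual_of_contract_cycles (hdual (n + 2)) (hF (n + 2)) (dQ (n + 1))
      (dP (n + 1)) (F (n + 1)) (t (n + 1)) (hg (n + 1)) (dQ n)
      (fun y hy => by simpa [hy] using ht n y) fun x => ?_
    rw [ih, ← LinearMap.comp_apply (dP n), hP, LinearMap.zero_apply, map_zero]

/-- Construction of a comparison morphism.  Given a `B`-module map `f : M → N`,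
a projective resolution `P_*` of `M` equipped with "dual families"
`{e_{n,i}}, {f_{n,i}}` with `x = Σ_i f_{n,i}(x)·e_{n,i}`, a complex `Q_*` over
`N` with a weak self-homotopy `{t_i}`, and the maps
`f_n(x) = Σ_i f_{n,i}(x)·g_{n,i}` defined recursively via
`g_{0,i} = t_{−1}(f(d_0^P(e_{0,i})))`, `g_{n,i} = t_{n−1}(f_{n−1}(d_n^P(e_{n,i})))`,
the family `{f_n}` is a chain map lifting `f`. -/
theorem stmt_3 (k : Type*) [Field k] (B : Type*) [Ring B] [Algebra k B]
    (M N : Type*) [AddCommGroup M] [Module B M] [AddCommGroup N] [Module B N]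
    [Module k N] [IsScalarTower k B N]
    (f : M →ₗ[B] N)
    -- the projective resolution P_* of M with the dual families
    (P : ℕ → Type*) [∀ n, AddCommGroup (P n)] [∀ n, Module B (P n)]
    (X : ℕ → Type*) [∀ n, Fintype (X n)]
    (e : ∀ n, X n → P n) (φ : ∀ n, X n → (P n →ₗ[B] B))
    (hdual : ∀ n (x : P n), x = ∑ i : X n, φ n i x • e n i)
    (dP : ∀ n, P (n + 1) →ₗ[B] P n) (dP0 : P 0 →ₗ[B] M)
    (hP0 : dP0.comp (dP 0) = 0) (hP : ∀ n, (dP n).comp (dP (n + 1)) = 0)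
    (hPproj : ∀ n, Module.Projective B (P n))
    (hPexact : Function.Surjective dP0 ∧
      (∀ x : P 0, dP0 x = 0 ↔ x ∈ Set.range (dP 0)) ∧
      (∀ n (x : P (n + 1)), dP n x = 0 ↔ x ∈ Set.range (dP (n + 1))))
    -- the complex Q_* over N with a weak self-homotopy
    (Q : ℕ → Type*) [∀ n, AddCommGroup (Q n)] [∀ n, Module B (Q n)]
    [∀ n, Module k (Q n)] [∀ n, IsScalarTower k B (Q n)]
    (dQ : ∀ n, Q (n + 1) →ₗ[B] Q n) (dQ0 : Q 0 →ₗ[B] N)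
    (hQ0 : dQ0.comp (dQ 0) = 0) (hQ : ∀ n, (dQ n).comp (dQ (n + 1)) = 0)
    (tneg : N →ₗ[k] Q 0) (t : ∀ n, Q n →ₗ[k] Q (n + 1))
    (htneg : ∀ x : N, dQ0 (tneg x) = x)
    (ht0 : ∀ x : Q 0, tneg (dQ0 x) + dQ 0 (t 0 x) = x)
    (ht : ∀ n (x : Q (n + 1)), t n (dQ n x) + dQ (n + 1) (t (n + 1) x) = x)
    -- the recursively constructed maps
    (g : ∀ n, X n → Q n) (F : ∀ n, P n →ₗ[B] Q n)
    (hg0 : ∀ i : X 0, g 0 i = tneg (f (dP0 (e 0 i))))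
    (hg : ∀ n (i : X (n + 1)), g (n + 1) i = t n (F n (dP n (e (n + 1) i))))
    (hF : ∀ n (x : P n), F n x = ∑ i : X n, φ n i x • g n i) :
    (∀ x : P 0, dQ0 (F 0 x) = f (dP0 x)) ∧
    (∀ n (x : P (n + 1)), dQ n (F (n + 1) x) = F n (dP n x)) :=
  stmt_3_general k B M N f P X e φ hdual dP dP0 hP0 hP Q dQ dQ0 tneg t htneg ht0 ht g F hg0 hg hF
end

section
/- Let k be a field and A a k-algebra with a fixed k-basis 𝓑. Let P_* → A be a projective A-bimodule resolution of A equipped with a weak self-homotopy {t_i}_{i ≥ −1} such that each t_i is a homomorphism of right A-modules and t_{i+1} ∘ t_i = 0 for all i ≥ −1. Let Ψ_* : Bar_*(A) → P_* be the chain map of A-bimodules lifting id_A constructed recursively as follows: Ψ_0 : A⊗A → P_0 is the bimodule map with Ψ_0(1⊗1) = t_{−1}(1), and for n ≥ 1, Ψ_n is the bimodule map determined on the free bimodule generators {1⊗a_1⊗⋯⊗a_n⊗1 : a_1,…,a_n ∈ 𝓑} of Bar_n(A) by Ψ_n(1⊗a_1⊗⋯⊗a_n⊗1) = t_{n−1}(Ψ_{n−1}(d_n(1⊗a_1⊗⋯⊗a_n⊗1))).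 Then for all n ≥ 1 and all a_1, …, a_n ∈ A one has Ψ_n(1⊗a_1⊗⋯⊗a_n⊗1) = t_{n−1}(a_1 · Ψ_{n−1}(1⊗a_2⊗⋯⊗a_n⊗1)). -/
/-! In the recursion for `ψ (n + 1)`, every term of the bar differential except the first is
`ψ n` of something, possibly translated on the right. By induction `ψ n` takes values in the image
of `t (n - 1)` (of `tneg` when `n = 0`), so `t n` kills these terms because `t ∘ t = 0` and `t` is
right `A`-linear. Multilinearity then extends the resulting formula from basis tuples to all tuples. -/

theorem MultilinearMap.eq_smul_tail_of_basis {k A M N ι : Type*} [CommSemiring k] [Semiring A]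
    [Algebra k A] [AddCommMonoid M] [Module k M] [Module A M] [IsScalarTower k A M]
    [AddCommMonoid N] [Module k N] (bb : Module.Basis ι k A) {n : ℕ}
    (f : MultilinearMap k (fun _ : Fin (n + 1) => A) N)
    (g : MultilinearMap k (fun _ : Fin n => A) M) (u : M →ₗ[k] N)
    (h : ∀ v : Fin (n + 1) → ι, f (fun j => bb (v j)) = u (bb (v 0) • g (fun j => bb (v j.succ))))
    (a : Fin (n + 1) → A) :
    f a = u (a 0 • g (fun j => a j.succ)) := by
  let smulG : A →ₗ[k] MultilinearMap k (fun _ : Fin n => A) M :=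
    { toFun := fun x => x • g
      map_add' := fun x y => add_smul x y g
      map_smul' := fun c x => MultilinearMap.ext fun m => smul_assoc c x (g m) }
  have hf : f = u.compMultilinearMap smulG.uncurryLeft :=
    Module.Basis.ext_multilinear (fun _ => bb) h
  rw [hf]
  rfl

theorem stmt_4_general (k : Type*) [Field k] (A : Type*) [Ring A] [Algebra k A]
    (ι : Type*) (bb : Module.Basis ι k A)
    (P : ℕ → Type*) [∀ n, AddCommGroup (P n)] [∀ n, Module k (P n)]
    [∀ n, Module A (P n)] [∀ n, Module Aᵐᵒᵖ (P n)]
    [∀ n, IsScalarTower k A (P n)]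
    (tneg : A →ₗ[k] P 0) (t : ∀ n, P n →ₗ[k] P (n + 1))
    -- the t_i are right A-module homomorphisms
    (htr : ∀ n (a : Aᵐᵒᵖ) (x : P n), t n (a • x) = a • t n x)
    -- t_{i+1} ∘ t_i = 0
    (htt : ∀ n (x : P n), t (n + 1) (t n x) = 0)
    (htt0 : ∀ a : A, t 0 (tneg a) = 0)
    -- Ψ encoded by dataless multilinear maps ψ_n(a⃗) = Ψ_n(1⊗a⃗⊗1)
    (ψ : ∀ n, MultilinearMap k (fun _ : Fin n => A) (P n))
    (hbase : ψ 0 (fun _ => (1 : A)) = tneg 1)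
    -- the recursion Ψ_n = t_{n−1} ∘ Ψ_{n−1} ∘ d_n^{Bar} on basis tuples
    (hrec : ∀ n (b : Fin (n + 1) → ι),
      ψ (n + 1) (fun j => bb (b j)) =
        t n (bb (b 0) • ψ n (fun j => bb (b j.succ))
          + (∑ i : Fin n, ((-1 : ℤ) ^ ((i : ℕ) + 1)) •
              ψ n (fun j : Fin n =>
                if (j : ℕ) < (i : ℕ) then bb (b j.castSucc)
                else if (j : ℕ) = (i : ℕ) then bb (b j.castSucc) * bb (b j.succ)
                else bb (b j.succ)))
          + ((-1 : ℤ) ^ (n + 1)) •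
              (MulOpposite.op (bb (b (Fin.last n))) •
                ψ n (fun j => bb (b j.castSucc))))) :
    ∀ n (a : Fin (n + 1) → A),
      ψ (n + 1) a = t n (a 0 • ψ n (fun j => a j.succ)) := by
  have hformula : ∀ n, (∀ x, t n (ψ n x) = 0) →
      ∀ a : Fin (n + 1) → A, ψ (n + 1) a = t n (a 0 • ψ n (fun j => a j.succ)) := by
    intro n hker
    refine MultilinearMap.eq_smul_tail_of_basis bb _ _ _ fun v => ?_
    simp only [hrec n v, map_add, map_sum, map_zsmul, htr, hker, smul_zero,
      Finset.sum_const_zero, add_zero]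
  have hker : ∀ n x, t n (ψ n x) = 0 := by
    intro n
    induction n with
    | zero =>
      intro x
      rw [Subsingleton.elim x (fun _ => 1), hbase, htt0]
    | succ n ih =>
      intro x
      rw [hformula n ih x, htt]
  exact fun n => hformula n (hker n)

/-- Let `P_* → A` be a projective bimodule resolution of a `k`-algebra `A`
equipped with a weak self-homotopy `{t_i}` consisting of right `A`-module maps
with `t_{i+1} ∘ t_i = 0`, and let `Ψ_* : Bar_*(A) → P_*` be the bimodule chain
map lifting `id_A` constructed recursively from `t` on the free bimodule
generators `1⊗b_1⊗⋯⊗b_n⊗1` (`b_i` in a fixed `k`-basis of `A`).  Encoding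
`Ψ_n` by the multilinear map `ψ_n(a_1,…,a_n) = Ψ_n(1⊗a_1⊗⋯⊗a_n⊗1)`, the
recursion `Ψ_n = t_{n−1} ∘ Ψ_{n−1} ∘ d_n` on basis tuples yields, for ALL
`a_1, …, a_n ∈ A`,
`Ψ_n(1⊗a_1⊗⋯⊗a_n⊗1) = t_{n−1}(a_1 · Ψ_{n−1}(1⊗a_2⊗⋯⊗a_n⊗1))`. -/
theorem stmt_4 (k : Type*) [Field k] (A : Type*) [Ring A] [Algebra k A]
    (ι : Type*) (bb : Module.Basis ι k A)
    (P : ℕ → Type*) [∀ n, AddCommGroup (P n)] [∀ n, Module k (P n)]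
    [∀ n, Module A (P n)] [∀ n, Module Aᵐᵒᵖ (P n)]
    [∀ n, IsScalarTower k A (P n)] [∀ n, IsScalarTower k Aᵐᵒᵖ (P n)]
    [∀ n, SMulCommClass A Aᵐᵒᵖ (P n)]
    (dP : ∀ n, P (n + 1) →ₗ[k] P n) (eps : P 0 →ₗ[k] A)
    (tneg : A →ₗ[k] P 0) (t : ∀ n, P n →ₗ[k] P (n + 1))
    -- weak self-homotopy
    (heps : ∀ a : A, eps (tneg a) = a)
    (h0 : ∀ x : P 0, tneg (eps x) + dP 0 (t 0 x) = x)
    (hh : ∀ n (x : P (n + 1)), t n (dP n x) + dP (n + 1) (t (n + 1) x) = x)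
    -- the t_i are right A-module homomorphisms
    (htr : ∀ n (a : Aᵐᵒᵖ) (x : P n), t n (a • x) = a • t n x)
    (htnegr : ∀ (a : Aᵐᵒᵖ) (b : A), tneg (a • b) = a • tneg b)
    -- t_{i+1} ∘ t_i = 0
    (htt : ∀ n (x : P n), t (n + 1) (t n x) = 0)
    (htt0 : ∀ a : A, t 0 (tneg a) = 0)
    -- Ψ encoded by dataless multilinear maps ψ_n(a⃗) = Ψ_n(1⊗a⃗⊗1)
    (ψ : ∀ n, MultilinearMap k (fun _ : Fin n => A) (P n))
    (hbase : ψ 0 (fun _ => (1 : A)) = tneg 1)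
    -- the recursion Ψ_n = t_{n−1} ∘ Ψ_{n−1} ∘ d_n^{Bar} on basis tuples
    (hrec : ∀ n (b : Fin (n + 1) → ι),
      ψ (n + 1) (fun j => bb (b j)) =
        t n (bb (b 0) • ψ n (fun j => bb (b j.succ))
          + (∑ i : Fin n, ((-1 : ℤ) ^ ((i : ℕ) + 1)) •
              ψ n (fun j : Fin n =>
                if (j : ℕ) < (i : ℕ) then bb (b j.castSucc)
                else if (j : ℕ) = (i : ℕ) then bb (b j.castSucc) * bb (b j.succ)
                else bb (b j.succ)))
          + ((-1 : ℤ) ^ (n + 1)) •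
              (MulOpposite.op (bb (b (Fin.last n))) •
                ψ n (fun j => bb (b j.castSucc))))) :
    ∀ n (a : Fin (n + 1) → A),
      ψ (n + 1) a = t n (a 0 • ψ n (fun j => a j.succ)) :=
  stmt_4_general k A ι bb P tneg t htr htt htt0 ψ hbase hrec
end

section
/- Let k be a field, A a k-algebra, and J(A) its Jacobson radical. Let ⋯ → P_n →(d_n^P) P_{n−1} → ⋯ → P_0 →(d_0^P) A → 0 be a projective A-bimodule resolution of A in which each P_n is a free A-bimodule with basis {e_{n,i}}_{i∈X_n}, and suppose the differentials are of the form d_n^P(e_{n,i}) = Σ_{j∈X_{n−1}} ( Σ_{p∈T_{n,i,j}} a_p·e_{n−1,j}·b_p + Σ_{q∈T'_{n,i,j}} e_{n−1,j}·b'_q ) with a_p ∈ J(A) and b_p, b'_q ∈ A. Let Φ_* : P_* → \overline{Bar}_*(A) be the chain map of A-bimodules lifting id_A defined recursively by Φ_0(e_{0,i}) = s_{−1}(d_0^P(e_{0,i})) and Φ_n(e_{n,i}) = s_{n−1}(Φ_{n−1}(d_n^P(e_{n,i}))) for n ≥ 1. Then for all n ≥ 1: Φ_n(e_{n,i}) =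 s_{n−1}( Σ_{j∈X_{n−1}} Σ_{p∈T_{n,i,j}} a_p · Φ_{n−1}(e_{n−1,j}) · b_p ), i.e. the terms of d_n^P(e_{n,i}) whose left coefficient is 1 contribute nothing. -/
/-!
Every value of `Φ` on a generator lies in the image of the homotopy (`Φ_n(e_{n,j}) = s_{n−1}(…)`,
resp. `s_{−1}(…)` for `n = 0`), so `s_n` kills it because `s_n ∘ s_{n−1} = 0`.  As `Φ` is a
bimodule map and `s_n` is right `A`-linear, `s_n(Φ_n(e_{n−1,j} · b')) = s_n(Φ_n(e_{n−1,j})) · b' = 0`: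
the summands of `d_n(e_{n,i})` with left coefficient `1` disappear after applying `s_{n−1} ∘ Φ_{n−1}`.
-/

theorem homotopy_apply_lift_generator_eq_zero {R M : Type*} [Semiring R] [AddCommMonoid M]
    [Module R M] {P Q : ℕ → Type*} [∀ n, AddCommMonoid (P n)] [∀ n, Module R (P n)]
    [∀ n, AddCommMonoid (Q n)] [∀ n, Module R (Q n)] {X : ℕ → Type*} (e : ∀ n, X n → P n)
    (dP : ∀ n, P (n + 1) →ₗ[R] P n) (dP0 : P 0 →ₗ[R] M)
    (sneg : M →ₗ[R] Q 0) (s : ∀ n, Q n →ₗ[R] Q (n + 1))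
    (hss : ∀ n (x : Q n), s (n + 1) (s n x) = 0) (hss0 : ∀ a : M, s 0 (sneg a) = 0)
    (Φ : ∀ n, P n →ₗ[R] Q n) (hΦ0 : ∀ i : X 0, Φ 0 (e 0 i) = sneg (dP0 (e 0 i)))
    (hΦ : ∀ n (i : X (n + 1)), Φ (n + 1) (e (n + 1) i) = s n (Φ n (dP n (e (n + 1) i))))
    (n : ℕ) (j : X n) : s n (Φ n (e n j)) = 0 := by
  cases n with
  | zero => rw [hΦ0 j, hss0]
  | succ m => rw [hΦ m j, hss]

theorem stmt_5_general (k : Type*) [Field k] (A : Type*) [Ring A] [Algebra k A]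
    -- the bimodule resolution P_* with free bimodule generators e
    (P : ℕ → Type*) [∀ n, AddCommGroup (P n)] [∀ n, Module k (P n)]
    [∀ n, Module A (P n)] [∀ n, Module Aᵐᵒᵖ (P n)]
    (X : ℕ → Type*) (e : ∀ n, X n → P n)
    (dP : ∀ n, P (n + 1) →ₗ[k] P n) (dP0 : P 0 →ₗ[k] A)
    -- the coefficient data of the differentials
    (ι₁ ι₂ : ∀ n, X (n + 1) → Type*)
    [∀ n i, Fintype (ι₁ n i)] [∀ n i, Fintype (ι₂ n i)]
    (ja jb : ∀ n i, ι₁ n i → A) (jx : ∀ n i, ι₁ n i → X n)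
    (qb : ∀ n i, ι₂ n i → A) (qx : ∀ n i, ι₂ n i → X n)
    (hdP : ∀ n (i : X (n + 1)),
      dP n (e (n + 1) i) =
        (∑ p : ι₁ n i, ja n i p • (MulOpposite.op (jb n i p) • e n (jx n i p)))
        + ∑ q : ι₂ n i, MulOpposite.op (qb n i q) • e n (qx n i q))
    -- the (normalized bar) target complex with its weak self-homotopy s,
    -- consisting of right A-module maps with s_{n+1} ∘ s_n = 0
    (Q : ℕ → Type*) [∀ n, AddCommGroup (Q n)] [∀ n, Module k (Q n)]
    [∀ n, Module A (Q n)] [∀ n, Module Aᵐᵒᵖ (Q n)]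
    (sneg : A →ₗ[k] Q 0) (s : ∀ n, Q n →ₗ[k] Q (n + 1))
    (hsr : ∀ n (a : Aᵐᵒᵖ) (x : Q n), s n (a • x) = a • s n x)
    (hss : ∀ n (x : Q n), s (n + 1) (s n x) = 0)
    (hss0 : ∀ a : A, s 0 (sneg a) = 0)
    -- the chain map Φ constructed recursively using s
    (Φ : ∀ n, P n →ₗ[k] Q n)
    (hΦr : ∀ n (a : Aᵐᵒᵖ) (x : P n), Φ n (a • x) = a • Φ n x)
    (hΦl : ∀ n (a : A) (x : P n), Φ n (a • x) = a • Φ n x)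
    (hΦ0 : ∀ i : X 0, Φ 0 (e 0 i) = sneg (dP0 (e 0 i)))
    (hΦ : ∀ n (i : X (n + 1)),
      Φ (n + 1) (e (n + 1) i) = s n (Φ n (dP n (e (n + 1) i)))) :
    ∀ n (i : X (n + 1)),
      Φ (n + 1) (e (n + 1) i) =
        s n (∑ p : ι₁ n i,
          ja n i p • (MulOpposite.op (jb n i p) • Φ n (e n (jx n i p)))) := by
  intro n i
  have hgen : ∀ j, s n (Φ n (e n j)) = 0 :=
    homotopy_apply_lift_generator_eq_zero e dP dP0 sneg s hss hss0 Φ hΦ0 hΦ n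
  have hright : s n (Φ n (∑ q : ι₂ n i, MulOpposite.op (qb n i q) • e n (qx n i q))) = 0 := by
    simp only [map_sum, hΦr, hsr, hgen, smul_zero, Finset.sum_const_zero]
  rw [hΦ n i, hdP n i, map_add, map_add, hright, add_zero]
  simp only [map_sum, hΦl, hΦr]

/-- Let `P_* → A` be a resolution of `A` by free `A`-bimodules with basis
`{e_{n,i}}`, whose differentials have the form
`d_n(e_{n,i}) = Σ_{j,p} a_p·e_{n−1,j}·b_p + Σ_{j,q} e_{n−1,j}·b'_q`
with all left coefficients `a_p` in the Jacobson radical of `A`.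
Let `Q_*` be the normalized bar resolution `\overline{Bar}_*(A)` with its
standard weak self-homotopy `s` (a family of right `A`-module maps with
`s_{n+1} ∘ s_n = 0`), and let `Φ_* : P_* → Q_*` be the chain map constructed
recursively by `Φ_0(e_{0,i}) = s_{−1}(d_0(e_{0,i}))` and
`Φ_n(e_{n,i}) = s_{n−1}(Φ_{n−1}(d_n(e_{n,i})))`.  Then the generators-with-
left-coefficient-1 contribute nothing:
`Φ_n(e_{n,i}) = s_{n−1}(Σ_{j,p} a_p · Φ_{n−1}(e_{n−1,j}) · b_p)`. -/
theorem stmt_5 (k : Type*) [Field k] (A : Type*) [Ring A] [Algebra k A]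
    -- the bimodule resolution P_* with free bimodule generators e
    (P : ℕ → Type*) [∀ n, AddCommGroup (P n)] [∀ n, Module k (P n)]
    [∀ n, Module A (P n)] [∀ n, Module Aᵐᵒᵖ (P n)]
    [∀ n, IsScalarTower k A (P n)] [∀ n, IsScalarTower k Aᵐᵒᵖ (P n)]
    [∀ n, SMulCommClass A Aᵐᵒᵖ (P n)]
    (X : ℕ → Type*) (e : ∀ n, X n → P n)
    (dP : ∀ n, P (n + 1) →ₗ[k] P n) (dP0 : P 0 →ₗ[k] A)
    -- the coefficient data of the differentials
    (ι₁ ι₂ : ∀ n, X (n + 1) → Type*)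
    [∀ n i, Fintype (ι₁ n i)] [∀ n i, Fintype (ι₂ n i)]
    (ja jb : ∀ n i, ι₁ n i → A) (jx : ∀ n i, ι₁ n i → X n)
    (qb : ∀ n i, ι₂ n i → A) (qx : ∀ n i, ι₂ n i → X n)
    (hrad : ∀ n i p, ja n i p ∈ (⊥ : Ideal A).jacobson)
    (hdP : ∀ n (i : X (n + 1)),
      dP n (e (n + 1) i) =
        (∑ p : ι₁ n i, ja n i p • (MulOpposite.op (jb n i p) • e n (jx n i p)))
        + ∑ q : ι₂ n i, MulOpposite.op (qb n i q) • e n (qx n i q))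
    -- the (normalized bar) target complex with its weak self-homotopy s,
    -- consisting of right A-module maps with s_{n+1} ∘ s_n = 0
    (Q : ℕ → Type*) [∀ n, AddCommGroup (Q n)] [∀ n, Module k (Q n)]
    [∀ n, Module A (Q n)] [∀ n, Module Aᵐᵒᵖ (Q n)]
    [∀ n, IsScalarTower k A (Q n)] [∀ n, IsScalarTower k Aᵐᵒᵖ (Q n)]
    [∀ n, SMulCommClass A Aᵐᵒᵖ (Q n)]
    (dQ : ∀ n, Q (n + 1) →ₗ[k] Q n) (dQ0 : Q 0 →ₗ[k] A)
    (sneg : A →ₗ[k] Q 0) (s : ∀ n, Q n →ₗ[k] Q (n + 1))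
    (hsneg : ∀ x : A, dQ0 (sneg x) = x)
    (hs0 : ∀ x : Q 0, sneg (dQ0 x) + dQ 0 (s 0 x) = x)
    (hs : ∀ n (x : Q (n + 1)), s n (dQ n x) + dQ (n + 1) (s (n + 1) x) = x)
    (hsr : ∀ n (a : Aᵐᵒᵖ) (x : Q n), s n (a • x) = a • s n x)
    (hsnegr : ∀ (a : Aᵐᵒᵖ) (b : A), sneg (a • b) = a • sneg b)
    (hss : ∀ n (x : Q n), s (n + 1) (s n x) = 0)
    (hss0 : ∀ a : A, s 0 (sneg a) = 0)
    -- the chain map Φ constructed recursively using s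
    (Φ : ∀ n, P n →ₗ[k] Q n)
    (hΦr : ∀ n (a : Aᵐᵒᵖ) (x : P n), Φ n (a • x) = a • Φ n x)
    (hΦl : ∀ n (a : A) (x : P n), Φ n (a • x) = a • Φ n x)
    (hΦ0 : ∀ i : X 0, Φ 0 (e 0 i) = sneg (dP0 (e 0 i)))
    (hΦ : ∀ n (i : X (n + 1)),
      Φ (n + 1) (e (n + 1) i) = s n (Φ n (dP n (e (n + 1) i)))) :
    ∀ n (i : X (n + 1)),
      Φ (n + 1) (e (n + 1) i) =
        s n (∑ p : ι₁ n i,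
          ja n i p • (MulOpposite.op (jb n i p) • Φ n (e n (jx n i p)))) :=
  stmt_5_general k A P X e dP dP0 ι₁ ι₂ ja jb jx qb qx hdP Q sneg s hsr hss hss0 Φ hΦr hΦl hΦ0 hΦ
end

section
/- Let k be an algebraically closed field of characteristic 2 and let Q₈ be the quaternion group of order 8. The group algebra kQ₈ is isomorphic as a k-algebra to A = k⟨x,y⟩/I, the quotient of the free associative k-algebra on two generators x, y by the two-sided ideal I generated by x²+yxy, y²+xyx, x⁴, y⁴. Moreover, the images in A of the eight monomials 1, x, y, xy, yx, xyx, yxy, xyxy form a k-basis of A. -/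
open scoped TensorProduct
open MulOpposite

noncomputable section

namespace QP

variable (k : Type*) [Field k]

/-- The generator `x` of the free algebra `k⟨x,y⟩`. -/
def Xg : FreeAlgebra k (Fin 2) := FreeAlgebra.ι k 0
/-- The generator `y` of the free algebra `k⟨x,y⟩`. -/
def Yg : FreeAlgebra k (Fin 2) := FreeAlgebra.ι k 1

/-- The relations `x²+yxy, y²+xyx, x⁴, y⁴` defining `kQ₈` in characteristic 2. -/
inductive QRel : FreeAlgebra k (Fin 2) → FreeAlgebra k (Fin 2) → Prop
  | rx : QRel (Xg k * Xg k + Yg k * Xg k * Yg k) 0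
  | ry : QRel (Yg k * Yg k + Xg k * Yg k * Xg k) 0
  | x4 : QRel (Xg k ^ 4) 0
  | y4 : QRel (Yg k ^ 4) 0

/-- `A = k⟨x,y⟩/(x²+yxy, y²+xyx, x⁴, y⁴)`. -/
abbrev A := RingQuot (QRel k)

/-- The image of `x` in `A`. -/
def x : A k := RingQuot.mkAlgHom k (QRel k) (Xg k)
/-- The image of `y` in `A`. -/
def y : A k := RingQuot.mkAlgHom k (QRel k) (Yg k)

/-- The monomial basis `1, x, y, xy, yx, xyx, yxy, xyxy` of `A`. -/
def mon : Fin 8 → A k :=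
  ![1, x k, y k, x k * y k, y k * x k, x k * y k * x k, y k * x k * y k,
    x k * y k * x k * y k]

/-- The dual family `1* = xyxy, x* = yxy, y* = xyx, (xy)* = xy, (yx)* = yx,
`(xyx)* = y, (yxy)* = x, (xyxy)* = 1`. -/
def dm : Fin 8 → A k :=
  ![mon k 7, mon k 6, mon k 5, mon k 3, mon k 4, mon k 2, mon k 1, mon k 0]

/-- `P₀ = P₃ = P₄ = A ⊗ A`. -/
abbrev AA := A k ⊗[k] A k
/-- `P₁ ≅ (A⊗A)² ≅ A ⊗ kQ₁ ⊗ A` (components: `x`-slot, `y`-slot); likewise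
`P₂ ≅ (A⊗A)² ≅ A ⊗ kQ₁* ⊗ A` (components: `r_x`-slot, `r_y`-slot). -/
abbrev PP := AA k × AA k

/-- Multiplication `A ⊗ A → A`. -/
def mulm : AA k →ₗ[k] A k := LinearMap.mul' k (A k)

/-- `two p q : a⊗b ↦ (a*p)⊗(q*b)`: the bimodule map `A⊗A → A⊗A` determined by
`1⊗1 ↦ p⊗q`. -/
def two (p q : A k) : AA k →ₗ[k] AA k :=
  TensorProduct.map (LinearMap.mulRight k p) (LinearMap.mulLeft k q)

/-- `el p q : a ↦ p⊗(q*a)`: the right `A`-module map `A → A⊗A` determined by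
`1 ↦ p⊗q`. -/
def el (p q : A k) : A k →ₗ[k] AA k :=
  (TensorProduct.mk k (A k) (A k) p).comp (LinearMap.mulLeft k q)

/-- Left multiplication by `a` on `A⊗A`. -/
def lm (a : A k) : AA k →ₗ[k] AA k := LinearMap.rTensor (A k) (LinearMap.mulLeft k a)
/-- Right multiplication by `a` on `A⊗A`. -/
def rm (a : A k) : AA k →ₗ[k] AA k := LinearMap.lTensor (A k) (LinearMap.mulRight k a)
/-- Left multiplication by `a` on `P₁` (or `P₂`). -/
def lmp (a : A k) : PP k →ₗ[k] PP k := (lm k a).prodMap (lm k a)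

/-- The bimodule map `A⊗A → A` determined by `1⊗1 ↦ c`, i.e. `a⊗b ↦ a*c*b`. -/
def bimap (c : A k) : AA k →ₗ[k] A k := (mulm k).comp (two k c 1)

/-- The bimodule map `P₁ → A` (or `P₂ → A`) with values `(c₁, c₂)` on the two
free generators. -/
def pairc (c1 c2 : A k) : PP k →ₗ[k] A k := (bimap k c1).coprod (bimap k c2)

/-- `d₀ : A⊗A → A` is the multiplication. -/
def d0 : AA k →ₗ[k] A k := mulm k

/-- `d₁ : P₁ → P₀`, `1⊗x⊗1 ↦ x⊗1+1⊗x`, `1⊗y⊗1 ↦ y⊗1+1⊗y`. -/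
def d1 : PP k →ₗ[k] AA k :=
  (two k (x k) 1 + two k 1 (x k)).coprod (two k (y k) 1 + two k 1 (y k))

/-- `d₂ : P₂ → P₁`, `1⊗r_x⊗1 ↦ 1⊗x⊗x + x⊗x⊗1 + 1⊗y⊗xy + y⊗x⊗y + yx⊗y⊗1` and
`1⊗r_y⊗1 ↦ 1⊗y⊗y + y⊗y⊗1 + 1⊗x⊗yx + x⊗y⊗x + xy⊗x⊗1`. -/
def d2 : PP k →ₗ[k] PP k :=
  ((two k 1 (x k) + two k (x k) 1 + two k (y k) (y k)).prod
      (two k 1 (x k * y k) + two k (y k * x k) 1)).coprod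
    ((two k 1 (y k * x k) + two k (x k * y k) 1).prod
      (two k 1 (y k) + two k (y k) 1 + two k (x k) (x k)))

/-- `d₃ : P₃ → P₂`, `1⊗1 ↦ x⊗r_x⊗1 + 1⊗r_x⊗x + y⊗r_y⊗1 + 1⊗r_y⊗y`. -/
def d3 : AA k →ₗ[k] PP k :=
  (two k (x k) 1 + two k 1 (x k)).prod (two k (y k) 1 + two k 1 (y k))

/-- `ρ : A → A⊗A`, `1 ↦ Σ_{b∈B} b*⊗b`. -/
def rho : A k →ₗ[k] AA k :=
  ∑ i : Fin 8,
    (((TensorProduct.mk k (A k) (A k)).flip (mon k i)).comp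
      (LinearMap.mulRight k (dm k i)))

/-- `d₄ = ρ ∘ d₀ : P₄ → P₃`. -/
def d4 : AA k →ₗ[k] AA k := (rho k).comp (d0 k)

variable {k}

/-- The right `A`-module map `A⊗A → V` sending `b⊗a ↦ g_b(a)` for `b` running
through the monomial basis `bb`. -/
def rext {V : Type*} [AddCommGroup V] [Module k V] (bb : Module.Basis (Fin 8) k (A k))
    (g : Fin 8 → (A k →ₗ[k] V)) : AA k →ₗ[k] V :=
  TensorProduct.lift (bb.constr k g)

variable (k)

/-- `t₋₁ : A → A⊗A`, `a ↦ 1⊗a`. -/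
def tneg : A k →ₗ[k] AA k := TensorProduct.mk k (A k) (A k) 1

/-- `C(b) ∈ P₁` for `b` in the monomial basis: the bimodule derivation applied
to the basis monomials. -/
def Cm : Fin 8 → PP k :=
  ![0,
    (1 ⊗ₜ 1, 0),
    (0, 1 ⊗ₜ 1),
    (1 ⊗ₜ y k, x k ⊗ₜ 1),
    (y k ⊗ₜ 1, 1 ⊗ₜ x k),
    (1 ⊗ₜ (y k * x k) + (x k * y k) ⊗ₜ 1, x k ⊗ₜ x k),
    (y k ⊗ₜ y k, 1 ⊗ₜ (x k * y k) + (y k * x k) ⊗ₜ 1),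
    (1 ⊗ₜ (y k * x k * y k) + (x k * y k) ⊗ₜ y k,
      x k ⊗ₜ (x k * y k) + (x k * y k * x k) ⊗ₜ 1)]

variable {k}

/-- `t₀ : P₀ → P₁`, `b⊗1 ↦ C(b)`, a right `A`-module map. -/
def t0 (bb : Module.Basis (Fin 8) k (A k)) : AA k →ₗ[k] PP k :=
  rext (V := PP k) bb
    ![0,
      (el k 1 1).prod 0,
      LinearMap.prod 0 (el k 1 1),
      (el k 1 (y k)).prod (el k (x k) 1),
      (el k (y k) 1).prod (el k 1 (x k)),
      (el k 1 (y k * x k) + el k (x k * y k) 1).prod (el k (x k) (x k)),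
      (el k (y k) (y k)).prod (el k 1 (x k * y k) + el k (y k * x k) 1),
      (el k 1 (y k * x k * y k) + el k (x k * y k) (y k)).prod
        (el k (x k) (x k * y k) + el k (x k * y k * x k) 1)]

/-- `t₁ : P₁ → P₂`, the right `A`-module map from the table in the paper. -/
def t1 (bb : Module.Basis (Fin 8) k (A k)) : PP k →ₗ[k] PP k :=
  (rext (V := PP k) bb
    ![0,
      (el k 1 1).prod 0,
      0,
      0,
      (el k (y k) 1 + el k (x k * y k) (y k)).prod (el k 1 (x k * y k)),
      (el k (x k * y k) 1).prod (el k (x k) (x k * y k)),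
      LinearMap.prod 0 (el k 1 (y k) + el k (y k) 1),
      (el k 1 (y k * x k * y k) + el k (x k) (x k) + el k (y k * x k * y k) 1).prod
        (el k (y k * x k) (x k * y k))]).coprod
  (rext (V := PP k) bb
    ![0,
      0,
      LinearMap.prod 0 (el k 1 1),
      (el k 1 (y k * x k)).prod (el k (x k) 1 + el k (y k * x k) (x k)),
      0,
      0,
      (el k (y k) (y k * x k)).prod (el k (y k * x k) 1),
      (el k (x k * y k) (y k * x k)).prod (el k (x k * y k * x k) 1)])

/-- `t₂ : P₂ → P₃`, the right `A`-module map from the table in the paper. -/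
def t2 (bb : Module.Basis (Fin 8) k (A k)) : PP k →ₗ[k] AA k :=
  (rext (V := AA k) bb
    ![0,
      el k 1 1,
      0,
      0,
      el k (y k) 1,
      el k (x k * y k) 1 + el k (x k) (y k),
      el k 1 (x k),
      el k 1 (y k * x k * y k) + el k (y k * x k * y k) 1 + el k (y k) (x k * y k)
        + el k (y k * x k) (y k)]).coprod
  (rext (V := AA k) bb
    ![0,
      0,
      0,
      el k (x k) 1,
      0,
      0,
      el k (y k) (x k) + el k (y k * x k) 1,
      el k (x k) (y k * x k) + el k (x k * y k) (x k) + el k (x k * y k * x k) 1])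

/-- `τ : P₃ → A`, `xyxy⊗1 ↦ 1`, `b⊗1 ↦ 0` for the other basis monomials. -/
def tau (bb : Module.Basis (Fin 8) k (A k)) : AA k →ₗ[k] A k :=
  rext bb ![0, 0, 0, 0, 0, 0, 0, LinearMap.id]

/-- `t₃ = t₋₁ ∘ τ : P₃ → P₄`. -/
def t3 (bb : Module.Basis (Fin 8) k (A k)) : AA k →ₗ[k] AA k := (tneg k).comp (tau bb)

/-- `Ψ₁(1⊗c⊗1) = t₀(c⊗1)`. -/
def psi1 (bb : Module.Basis (Fin 8) k (A k)) (c : A k) : PP k := t0 bb (c ⊗ₜ 1)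
/-- `Ψ₂(1⊗b⊗c⊗1) = t₁(b·Ψ₁(1⊗c⊗1))`. -/
def psi2 (bb : Module.Basis (Fin 8) k (A k)) (b c : A k) : PP k := t1 bb (lmp k b (psi1 bb c))
/-- `Ψ₃(1⊗a⊗b⊗c⊗1) = t₂(a·Ψ₂(1⊗b⊗c⊗1))`. -/
def psi3 (bb : Module.Basis (Fin 8) k (A k)) (a b c : A k) : AA k :=
  t2 bb (lmp k a (psi2 bb b c))
/-- `Ψ₄(1⊗a₀⊗a⊗b⊗c⊗1) = t₃(a₀·Ψ₃(1⊗a⊗b⊗c⊗1))`. -/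
def psi4 (bb : Module.Basis (Fin 8) k (A k)) (a0 a b c : A k) : AA k :=
  t3 bb (lm k a0 (psi3 bb a b c))

/-- The symmetrizing bilinear form: `⟨a,b⟩` is the coefficient of `xyxy` in
`a*b`; on basis monomials it is `1` iff `b₁b₂ = xyxy` and `0` otherwise. -/
def bform (bb : Module.Basis (Fin 8) k (A k)) (a b : A k) : k := bb.repr (a * b) 7

end QP

/-!
In `A` the relations give `x² = yxy` and `y² = xyx`, and `w = x²y` satisfies `w = y w x`, so
`w = y⁴ w x⁴ = 0`; symmetrically `y²x = 0`. With these, left multiplication by `x` and `y` maps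
the eight monomials into their span, so they span `A` and `dim A ≤ 8`.

Let `ω` be a root of `t² + t + 1` (a primitive cube root of unity) and `g = a 1`, `h = xa 0` in
`Q₈`. Then `x ↦ ωg + h + (1+ω)hg`, `y ↦ (1+ω)g + h + ωhg` respects the relations, and `g`, `h`
are polynomials in the images of `x`, `y`, so `A → kQ₈` is surjective onto an 8-dimensional
algebra. Comparing dimensions makes it an isomorphism and the eight monomials a basis.
-/

theorem eq_zero_of_eq_mul_mul_of_pow_eq_zero {R : Type*} [MonoidWithZero R] {a b w : R} {n : ℕ}
    (hw : w = a * w * b) (ha : a ^ n = 0) : w = 0 := by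
  have key : ∀ m : ℕ, w = a ^ m * w * b ^ m := by
    intro m
    induction m with
    | zero => simp
    | succ m ih =>
      calc w = a ^ m * (a * w * b) * b ^ m := by rw [← hw]; exact ih
        _ = a ^ (m + 1) * w * b ^ (m + 1) := by rw [pow_succ, pow_succ' b]; simp only [mul_assoc]
  rw [key n, ha, zero_mul, zero_mul]

theorem eq_of_add_eq_zero_of_two_eq_zero {R : Type*} [Ring R] (h2 : (2 : R) = 0) {a b : R}
    (h : a + b = 0) : a = b :=
  (eq_neg_of_add_eq_zero_left h).trans
    (neg_eq_of_add_eq_zero_right (by rw [← two_mul, h2, zero_mul]))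

theorem Submodule.span_range_eq_top_of_mul_mem {R A ι : Type*} [CommSemiring R] [Semiring A]
    [Algebra R A] {s : Set A} (hs : Algebra.adjoin R s = ⊤) {v : ι → A}
    (h1 : (1 : A) ∈ span R (Set.range v))
    (hmul : ∀ a ∈ s, ∀ i, a * v i ∈ span R (Set.range v)) :
    span R (Set.range v) = ⊤ := by
  set S := span R (Set.range v)
  have hmulS : ∀ a ∈ s, ∀ m ∈ S, a * m ∈ S := by
    intro a ha m hm
    induction hm using Submodule.span_induction with
    | mem _ hm => obtain ⟨i, rfl⟩ := hm; exact hmul a ha i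
    | zero => simp
    | add _ _ _ _ hm hm' => rw [mul_add]; exact add_mem hm hm'
    | smul r _ _ hm => rw [mul_smul_comm]; exact S.smul_mem r hm
  rw [eq_top_iff]
  rintro z -
  have hz : z ∈ Algebra.adjoin R s := hs ▸ Algebra.mem_top
  suffices ∀ m ∈ S, z * m ∈ S by simpa using this 1 h1
  induction hz using Algebra.adjoin_induction with
  | mem a ha => exact hmulS a ha
  | algebraMap r => intro m hm; rw [← Algebra.smul_def]; exact S.smul_mem r hm
  | add a b _ _ ha hb => intro m hm; rw [add_mul]; exact add_mem (ha m hm) (hb m hm)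
  | mul a b _ _ ha hb => intro m hm; rw [mul_assoc]; exact ha _ (hb m hm)

theorem QuaternionGroup.subalgebra_eq_top_of_generators_mem {k : Type*} [CommSemiring k] {n : ℕ}
    [NeZero n] {S : Subalgebra k (MonoidAlgebra k (QuaternionGroup n))}
    (ha : MonoidAlgebra.of k _ (a 1) ∈ S) (hxa : MonoidAlgebra.of k _ (xa 0) ∈ S) : S = ⊤ := by
  have hof_a (i : ZMod (2 * n)) : MonoidAlgebra.of k _ (a i) ∈ S := by
    rw [← ZMod.natCast_zmod_val i, ← a_one_pow, map_pow]
    exact pow_mem ha _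
  have hof (g : QuaternionGroup n) : MonoidAlgebra.of k _ g ∈ S := by
    cases g with
    | a i => exact hof_a i
    | xa i => rw [← zero_add i, ← xa_mul_a, map_mul]; exact mul_mem hxa (hof_a i)
  rw [eq_top_iff]
  rintro f -
  induction f using MonoidAlgebra.induction_on with
  | of g => exact hof g
  | add f g hf hg => exact add_mem hf hg
  | smul r f hf => exact S.smul_mem hf r

theorem QuaternionGroup.finrank_monoidAlgebra (k : Type*) [Field k] (n : ℕ) [NeZero n] :
    Module.finrank k (MonoidAlgebra k (QuaternionGroup n)) = 4 * n := by
  rw [Module.finrank_eq_card_basis (MonoidAlgebra.basis _ k), QuaternionGroup.card]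

theorem exists_sq_add_self_add_one_eq_zero (k : Type*) [Field k] [IsAlgClosed k] :
    ∃ ω : k, ω ^ 2 + ω + 1 = 0 := by
  open Polynomial in
  have hdeg : (X ^ 2 + X + 1 : k[X]).degree = 2 := by compute_degree!
  obtain ⟨ω, hω⟩ := IsAlgClosed.exists_root _ (by rw [hdeg]; simp)
  exact ⟨ω, by simpa using hω⟩

namespace QP

open Submodule Set

variable {k : Type*} [Field k]

theorem two_eq_zero [CharP k 2] : (2 : A k) = 0 := by
  calc (2 : A k) = algebraMap k (A k) 2 := (map_ofNat _ 2).symm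
    _ = 0 := by rw [CharTwo.two_eq_zero (R := k), map_zero]

theorem x_mul_x [CharP k 2] : x k * x k = y k * x k * y k := by
  have h := RingQuot.mkAlgHom_rel k (QRel.rx (k := k))
  rw [map_add, map_mul, map_mul, map_mul, map_zero] at h
  exact eq_of_add_eq_zero_of_two_eq_zero two_eq_zero h

theorem y_mul_y [CharP k 2] : y k * y k = x k * y k * x k := by
  have h := RingQuot.mkAlgHom_rel k (QRel.ry (k := k))
  rw [map_add, map_mul, map_mul, map_mul, map_zero] at h
  exact eq_of_add_eq_zero_of_two_eq_zero two_eq_zero h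

theorem x_pow_four : x k ^ 4 = 0 := by
  have h := RingQuot.mkAlgHom_rel k (QRel.x4 (k := k))
  rwa [map_pow, map_zero] at h

theorem y_pow_four : y k ^ 4 = 0 := by
  have h := RingQuot.mkAlgHom_rel k (QRel.y4 (k := k))
  rwa [map_pow, map_zero] at h

theorem x_mul_x_mul_y [CharP k 2] : x k * x k * y k = 0 := by
  refine eq_zero_of_eq_mul_mul_of_pow_eq_zero (b := x k) ?_ y_pow_four
  calc x k * x k * y k = y k * x k * (y k * y k) := by rw [x_mul_x]; simp only [mul_assoc]
    _ = y k * (x k * x k * y k) * x k := by rw [y_mul_y]; simp only [mul_assoc]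

theorem y_mul_y_mul_x [CharP k 2] : y k * y k * x k = 0 := by
  refine eq_zero_of_eq_mul_mul_of_pow_eq_zero (b := y k) ?_ x_pow_four
  calc y k * y k * x k = x k * y k * (x k * x k) := by rw [y_mul_y]; simp only [mul_assoc]
    _ = x k * (y k * y k * x k) * y k := by rw [x_mul_x]; simp only [mul_assoc]

theorem adjoin_x_y : Algebra.adjoin k {x k, y k} = ⊤ := by
  have : {x k, y k} = RingQuot.mkAlgHom k (QRel k) '' range (FreeAlgebra.ι k) := by
    ext z
    simp [Fin.exists_fin_two, x, y, Xg, Yg, eq_comm]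
  rw [this, ← AlgHom.map_adjoin, FreeAlgebra.adjoin_range_ι, Algebra.map_top,
    AlgHom.range_eq_top]
  exact RingQuot.mkAlgHom_surjective k (QRel k)

theorem mem_span_mon_of_eq {a : A k} (i : Fin 8) (h : a = mon k i) :
    a ∈ span k (range (mon k)) :=
  h ▸ subset_span ⟨i, rfl⟩

theorem mem_span_mon_of_eq_zero {a : A k} (h : a = 0) : a ∈ span k (range (mon k)) :=
  h ▸ zero_mem _

theorem x_mul_mon_mem [CharP k 2] (j : Fin 8) : x k * mon k j ∈ span k (range (mon k)) := by
  fin_cases j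
  · exact mem_span_mon_of_eq 1 (mul_one _)
  · exact mem_span_mon_of_eq 6 x_mul_x
  · exact mem_span_mon_of_eq 3 rfl
  · exact mem_span_mon_of_eq_zero ((mul_assoc _ _ _).symm.trans x_mul_x_mul_y)
  · exact mem_span_mon_of_eq 5 (mul_assoc _ _ _).symm
  · exact mem_span_mon_of_eq_zero (by
      show x k * (x k * y k * x k) = 0
      simp only [← mul_assoc, x_mul_x_mul_y, zero_mul])
  · exact mem_span_mon_of_eq 7 (by
      show x k * (y k * x k * y k) = x k * y k * x k * y k
      simp only [mul_assoc])
  · exact mem_span_mon_of_eq_zero (by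
      show x k * (x k * y k * x k * y k) = 0
      simp only [← mul_assoc, x_mul_x_mul_y, zero_mul])

theorem y_mul_mon_mem [CharP k 2] (j : Fin 8) : y k * mon k j ∈ span k (range (mon k)) := by
  fin_cases j
  · exact mem_span_mon_of_eq 2 (mul_one _)
  · exact mem_span_mon_of_eq 4 rfl
  · exact mem_span_mon_of_eq 5 y_mul_y
  · exact mem_span_mon_of_eq 6 (mul_assoc _ _ _).symm
  · exact mem_span_mon_of_eq_zero ((mul_assoc _ _ _).symm.trans y_mul_y_mul_x)
  · exact mem_span_mon_of_eq 7 (by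
      show y k * (x k * y k * x k) = x k * y k * x k * y k
      rw [← y_mul_y, ← mul_assoc, y_mul_y])
  · exact mem_span_mon_of_eq_zero (by
      show y k * (y k * x k * y k) = 0
      simp only [← mul_assoc, y_mul_y_mul_x, zero_mul])
  · exact mem_span_mon_of_eq_zero (by
      show y k * (x k * y k * x k * y k) = 0
      simp only [← mul_assoc]
      rw [← x_mul_x, mul_assoc (x k) (x k) (x k), mul_assoc (x k), x_mul_x_mul_y, mul_zero])

theorem span_mon_eq_top [CharP k 2] : span k (range (mon k)) = ⊤ := by
  refine span_range_eq_top_of_mul_mem adjoin_x_y (mem_span_mon_of_eq 0 rfl) ?_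
  rintro a (rfl | rfl)
  exacts [x_mul_mon_mem, y_mul_mon_mem]

open QuaternionGroup MonoidAlgebra

local notation "Q₈" => QuaternionGroup 2

def quatX (ω : k) : MonoidAlgebra k Q₈ :=
  ω • of k Q₈ (a 1) + of k Q₈ (xa 0) + (1 + ω) • of k Q₈ (xa 1)

def quatY (ω : k) : MonoidAlgebra k Q₈ :=
  (1 + ω) • of k Q₈ (a 1) + of k Q₈ (xa 0) + ω • of k Q₈ (xa 1)

variable [CharP k 2] {ω : k}

theorem quatX_mul_quatX_add (hω : ω ^ 2 + ω + 1 = 0) :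
    quatX ω * quatX ω + quatY ω * quatX ω * quatY ω = 0 := by
  simp only [quatX, quatY, add_mul, mul_add, smul_mul_assoc, mul_smul_comm, ← map_mul, a_mul_a,
    a_mul_xa, xa_mul_a, xa_mul_xa]
  reduce_mod_char
  match_scalars <;> grind

theorem quatY_mul_quatY_add (hω : ω ^ 2 + ω + 1 = 0) :
    quatY ω * quatY ω + quatX ω * quatY ω * quatX ω = 0 := by
  simp only [quatX, quatY, add_mul, mul_add, smul_mul_assoc, mul_smul_comm, ← map_mul, a_mul_a,
    a_mul_xa, xa_mul_a, xa_mul_xa]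
  reduce_mod_char
  match_scalars <;> grind

theorem quatX_pow_four : quatX ω ^ 4 = 0 := by
  simp only [quatX, pow_succ, pow_zero, one_mul, add_mul, mul_add, smul_mul_assoc, mul_smul_comm,
    ← map_mul, a_mul_a, a_mul_xa, xa_mul_a, xa_mul_xa]
  reduce_mod_char
  match_scalars <;> grind

theorem quatY_pow_four : quatY ω ^ 4 = 0 := by
  simp only [quatY, pow_succ, pow_zero, one_mul, add_mul, mul_add, smul_mul_assoc, mul_smul_comm,
    ← map_mul, a_mul_a, a_mul_xa, xa_mul_a, xa_mul_xa]
  reduce_mod_char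
  match_scalars <;> grind

theorem of_a_one_eq (hω : ω ^ 2 + ω + 1 = 0) :
    of k Q₈ (a 1) = 1 + (1 + ω) • quatX ω + ω • quatY ω + ω • (quatX ω * quatY ω)
      + (1 + ω) • (quatY ω * quatX ω) + quatX ω * quatY ω * quatX ω * quatY ω := by
  rw [← map_one (of k Q₈), one_def]
  simp only [quatX, quatY, add_mul, mul_add, smul_add, smul_mul_assoc, mul_smul_comm, smul_smul,
    ← map_mul, a_mul_a, a_mul_xa, xa_mul_a, xa_mul_xa]
  reduce_mod_char
  match_scalars <;> grind

theorem of_xa_zero_eq (hω : ω ^ 2 + ω + 1 = 0) :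
    of k Q₈ (xa 0) = 1 + quatX ω + quatY ω + ω • (quatX ω * quatY ω)
      + (1 + ω) • (quatY ω * quatX ω) + quatX ω * quatY ω * quatX ω * quatY ω := by
  rw [← map_one (of k Q₈), one_def]
  simp only [quatX, quatY, add_mul, mul_add, smul_add, smul_mul_assoc, mul_smul_comm, smul_smul,
    ← map_mul, a_mul_a, a_mul_xa, xa_mul_a, xa_mul_xa]
  reduce_mod_char
  match_scalars <;> grind

def toGroupAlgebra (hω : ω ^ 2 + ω + 1 = 0) : A k →ₐ[k] MonoidAlgebra k Q₈ :=
  RingQuot.liftAlgHom k ⟨FreeAlgebra.lift k ![quatX ω, quatY ω], fun _ _ h => by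
    cases h <;> simp [Xg, Yg, quatX_mul_quatX_add hω, quatY_mul_quatY_add hω, quatX_pow_four,
      quatY_pow_four]⟩

@[simp]
theorem toGroupAlgebra_x (hω : ω ^ 2 + ω + 1 = 0) : toGroupAlgebra hω (x k) = quatX ω := by
  simp [toGroupAlgebra, x, Xg]

@[simp]
theorem toGroupAlgebra_y (hω : ω ^ 2 + ω + 1 = 0) : toGroupAlgebra hω (y k) = quatY ω := by
  simp [toGroupAlgebra, y, Yg]

theorem toGroupAlgebra_surjective (hω : ω ^ 2 + ω + 1 = 0) :
    Function.Surjective (toGroupAlgebra hω) := by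
  refine (AlgHom.range_eq_top _).1 (QuaternionGroup.subalgebra_eq_top_of_generators_mem ?_ ?_)
  · rw [of_a_one_eq hω]
    exact ⟨1 + (1 + ω) • x k + ω • y k + ω • (x k * y k) + (1 + ω) • (y k * x k)
      + x k * y k * x k * y k, by simp⟩
  · rw [of_xa_zero_eq hω]
    exact ⟨1 + x k + y k + ω • (x k * y k) + (1 + ω) • (y k * x k)
      + x k * y k * x k * y k, by simp⟩

instance : Module.Finite k (A k) :=
  Module.finite_def.2 (Submodule.fg_def.2 ⟨_, Set.finite_range (mon k), span_mon_eq_top⟩)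

theorem finrank_A (hω : ω ^ 2 + ω + 1 = 0) : Module.finrank k (A k) = 8 := by
  refine le_antisymm (by simpa using finrank_le_of_span_eq_top span_mon_eq_top) ?_
  calc 8 = Module.finrank k (MonoidAlgebra k Q₈) :=
        (QuaternionGroup.finrank_monoidAlgebra k 2).symm
    _ ≤ Module.finrank k (A k) :=
        LinearMap.finrank_le_finrank_of_surjective (f := (toGroupAlgebra hω).toLinearMap)
          (toGroupAlgebra_surjective hω)

theorem toGroupAlgebra_bijective (hω : ω ^ 2 + ω + 1 = 0) :
    Function.Bijective (toGroupAlgebra hω) := by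
  refine ⟨?_, toGroupAlgebra_surjective hω⟩
  refine (LinearMap.injective_iff_surjective_of_finrank_eq_finrank
    (f := (toGroupAlgebra hω).toLinearMap) ?_).2 (toGroupAlgebra_surjective hω)
  rw [finrank_A hω, QuaternionGroup.finrank_monoidAlgebra]

theorem linearIndependent_mon (hω : ω ^ 2 + ω + 1 = 0) : LinearIndependent k (mon k) :=
  linearIndependent_of_top_le_span_of_card_eq_finrank span_mon_eq_top.ge (by simp [finrank_A hω])

end QP

open QP in
/-- Over an algebraically closed field `k` of characteristic two, the group
algebra `kQ₈` of the quaternion group of order 8 is isomorphic as a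
`k`-algebra to `A = k⟨x,y⟩/(x²+yxy, y²+xyx, x⁴, y⁴)`, and the images of the
monomials `1, x, y, xy, yx, xyx, yxy, xyxy` form a `k`-basis of `A`. -/
theorem stmt_6 (k : Type) [Field k] [IsAlgClosed k] [CharP k 2] :
    Nonempty (MonoidAlgebra k (QuaternionGroup 2) ≃ₐ[k] A k) ∧
    LinearIndependent k (mon k) ∧
    Submodule.span k (Set.range (mon k)) = ⊤ := by
  obtain ⟨ω, hω⟩ := exists_sq_add_self_add_one_eq_zero k
  exact ⟨⟨(AlgEquiv.ofBijective _ (toGroupAlgebra_bijective hω)).symm⟩,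
    linearIndependent_mon hω, span_mon_eq_top⟩
end
end

section
/- With Ψ_* and Φ_* the comparison chain maps between the bar resolution Bar_*(A) and the 4-periodic resolution P_*, one has Ψ_3 ∘ Φ_3 = id_{P_3} and Ψ_4 ∘ Φ_4 = id_{P_4}. -/
open scoped TensorProduct
open MulOpposite

noncomputable section

/-!
Only the summand `1⊗x⊗x⊗x⊗1` of `Φ₃(1⊗1)` survives `Ψ₃`: along the recursion
`Ψ_n = t_{n-1}(a₁ · Ψ_{n-1})` the other five summands reach one of `y⊗x⊗1`, `yx⊗y⊗1`,
`x⊗y⊗1`, `xy⊗x⊗1`, `y⊗r_y⊗1`, where the tables of `t₁`, `t₂` vanish, whereas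
`t₀(x⊗1) = 1⊗x⊗1`, `t₁(x⊗x⊗1) = 1⊗r_x⊗1`, `t₂(x⊗r_x⊗1) = 1⊗1`. Consequently
`Ψ₄(1⊗b⊗x⊗x⊗x⊗1) = 1⊗τ(b⊗1)`, which is nonzero only for `b = xyxy`, and
`(xyxy)* = 1`.
-/

namespace QP

variable {k : Type*} [Field k]

lemma lm_tmul (a b c : A k) : lm k a (b ⊗ₜ[k] c) = (a * b) ⊗ₜ[k] c := rfl

lemma rm_tmul (a b c : A k) : rm k a (b ⊗ₜ[k] c) = b ⊗ₜ[k] (c * a) := rfl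

lemma lmp_apply (a : A k) (u v : AA k) : lmp k a (u, v) = (lm k a u, lm k a v) := rfl

lemma el_apply (p q a : A k) : el k p q a = p ⊗ₜ[k] (q * a) := rfl

section Comparison

variable {bb : Module.Basis (Fin 8) k (A k)}

lemma psi3_eq_zero_of_psi2_eq_zero {b c : A k} (h : psi2 bb b c = 0) (a : A k) :
    psi3 bb a b c = 0 := by
  rw [psi3, h, map_zero, map_zero]

lemma psi4_eq_zero_of_psi3_eq_zero {a b c : A k} (h : psi3 bb a b c = 0) (a₀ : A k) :
    psi4 bb a₀ a b c = 0 := by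
  rw [psi4, h, map_zero, map_zero]

variable (hbb : ∀ i, bb i = mon k i)
include hbb

lemma rext_mon_tmul {V : Type*} [AddCommGroup V] [Module k V]
    (g : Fin 8 → (A k →ₗ[k] V)) (i : Fin 8) (a : A k) :
    rext bb g (mon k i ⊗ₜ[k] a) = g i a := by
  rw [rext, TensorProduct.lift.tmul, ← hbb, Module.Basis.constr_basis]

lemma rext_x_tmul {V : Type*} [AddCommGroup V] [Module k V]
    (g : Fin 8 → (A k →ₗ[k] V)) (a : A k) : rext bb g (x k ⊗ₜ[k] a) = g 1 a :=
  rext_mon_tmul hbb g 1 a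

lemma rext_y_tmul {V : Type*} [AddCommGroup V] [Module k V]
    (g : Fin 8 → (A k →ₗ[k] V)) (a : A k) : rext bb g (y k ⊗ₜ[k] a) = g 2 a :=
  rext_mon_tmul hbb g 2 a

lemma rext_xy_tmul {V : Type*} [AddCommGroup V] [Module k V]
    (g : Fin 8 → (A k →ₗ[k] V)) (a : A k) : rext bb g ((x k * y k) ⊗ₜ[k] a) = g 3 a :=
  rext_mon_tmul hbb g 3 a

lemma rext_yx_tmul {V : Type*} [AddCommGroup V] [Module k V]
    (g : Fin 8 → (A k →ₗ[k] V)) (a : A k) : rext bb g ((y k * x k) ⊗ₜ[k] a) = g 4 a :=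
  rext_mon_tmul hbb g 4 a

lemma psi1_x : psi1 bb (x k) = ((1 : A k) ⊗ₜ[k] (1 : A k), 0) := by
  simp [psi1, t0, rext_x_tmul hbb, el_apply]

lemma psi1_y : psi1 bb (y k) = (0, (1 : A k) ⊗ₜ[k] (1 : A k)) := by
  simp [psi1, t0, rext_y_tmul hbb, el_apply]

lemma psi2_x_x : psi2 bb (x k) (x k) = ((1 : A k) ⊗ₜ[k] (1 : A k), 0) := by
  simp [psi2, psi1_x hbb, lmp_apply, lm_tmul, t1, rext_x_tmul hbb, el_apply]

lemma psi2_y_y : psi2 bb (y k) (y k) = (0, (1 : A k) ⊗ₜ[k] (1 : A k)) := by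
  simp [psi2, psi1_y hbb, lmp_apply, lm_tmul, t1, rext_y_tmul hbb, el_apply]

lemma psi2_y_x : psi2 bb (y k) (x k) = 0 := by
  simp [psi2, psi1_x hbb, lmp_apply, lm_tmul, t1, rext_y_tmul hbb]

lemma psi2_x_y : psi2 bb (x k) (y k) = 0 := by
  simp [psi2, psi1_y hbb, lmp_apply, lm_tmul, t1, rext_x_tmul hbb]

lemma psi2_xy_x : psi2 bb (x k * y k) (x k) = 0 := by
  simp [psi2, psi1_x hbb, lmp_apply, lm_tmul, t1, rext_xy_tmul hbb]

lemma psi2_yx_y : psi2 bb (y k * x k) (y k) = 0 := by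
  simp [psi2, psi1_y hbb, lmp_apply, lm_tmul, t1, rext_yx_tmul hbb]

lemma psi3_x_x_x : psi3 bb (x k) (x k) (x k) = (1 : A k) ⊗ₜ[k] (1 : A k) := by
  simp [psi3, psi2_x_x hbb, lmp_apply, lm_tmul, t2, rext_x_tmul hbb, el_apply]

lemma psi3_y_y_y : psi3 bb (y k) (y k) (y k) = 0 := by
  simp [psi3, psi2_y_y hbb, lmp_apply, lm_tmul, t2, rext_y_tmul hbb]

lemma psi4_mon_x_x_x (i : Fin 8) :
    psi4 bb (mon k i) (x k) (x k) (x k) =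
      if i = 7 then (1 : A k) ⊗ₜ[k] (1 : A k) else 0 := by
  rw [psi4, psi3_x_x_x hbb, lm_tmul, mul_one, t3, LinearMap.comp_apply, tau,
    rext_mon_tmul hbb]
  fin_cases i <;> simp [tneg]

end Comparison

end QP

open QP

theorem stmt_10_general (k : Type) [Field k]
    (bb : Module.Basis (Fin 8) k (A k)) (hbb : ∀ i, bb i = mon k i) :
    -- Ψ₃(Φ₃(1⊗1)) = 1⊗1
    (psi3 bb (x k) (x k) (x k)
      + rm k (y k) (psi3 bb (x k) (y k) (x k))
      + psi3 bb (x k) (y k * x k) (y k)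
      + psi3 bb (y k) (y k) (y k)
      + rm k (x k) (psi3 bb (y k) (x k) (y k))
      + psi3 bb (y k) (x k * y k) (x k)
      = (1 : A k) ⊗ₜ[k] (1 : A k)) ∧
    -- Ψ₄(Φ₄(1⊗1)) = 1⊗1
    ((∑ i ∈ Finset.univ.erase (0 : Fin 8),
        (rm k (dm k i) (psi4 bb (mon k i) (x k) (x k) (x k))
          + rm k (y k * dm k i) (psi4 bb (mon k i) (x k) (y k) (x k))
          + rm k (dm k i) (psi4 bb (mon k i) (x k) (y k * x k) (y k))
          + rm k (dm k i) (psi4 bb (mon k i) (y k) (y k) (y k))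
          + rm k (x k * dm k i) (psi4 bb (mon k i) (y k) (x k) (y k))
          + rm k (dm k i) (psi4 bb (mon k i) (y k) (x k * y k) (x k))))
      = (1 : A k) ⊗ₜ[k] (1 : A k)) := by
  have h_xyx := psi3_eq_zero_of_psi2_eq_zero (psi2_y_x hbb) (x k)
  have h_xyxy := psi3_eq_zero_of_psi2_eq_zero (psi2_yx_y hbb) (x k)
  have h_yxy := psi3_eq_zero_of_psi2_eq_zero (psi2_x_y hbb) (y k)
  have h_yxyx := psi3_eq_zero_of_psi2_eq_zero (psi2_xy_x hbb) (y k)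
  have h_yyy := psi3_y_y_y hbb
  refine ⟨?_, ?_⟩
  · simp [psi3_x_x_x hbb, h_xyx, h_xyxy, h_yxy, h_yxyx, h_yyy]
  · have hdm : dm k 7 = 1 := rfl
    simp [psi4_mon_x_x_x hbb, psi4_eq_zero_of_psi3_eq_zero, h_xyx, h_xyxy, h_yxy, h_yxyx,
      h_yyy, apply_ite, Finset.sum_ite_eq', rm_tmul, hdm]

/-- With `Ψ_*` and `Φ_*` the comparison chain maps of bimodules between the
bar resolution and the 4-periodic resolution `P_*`, one has
`Ψ₃ ∘ Φ₃ = id_{P₃}` and `Ψ₄ ∘ Φ₄ = id_{P₄}`.  Both composites are bimodule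
endomorphisms of `A⊗A`, so this is equivalent to their values at the
generator `1⊗1` being `1⊗1`, computed from
`Φ₃(1⊗1) = 1⊗x⊗x⊗x⊗1 + 1⊗x⊗y⊗x⊗y + 1⊗x⊗yx⊗y⊗1 + 1⊗y⊗y⊗y⊗1 + 1⊗y⊗x⊗y⊗x +
1⊗y⊗xy⊗x⊗1`, `Φ₄(1⊗1) = Σ_{b∈B∖{1}} 1⊗b·Φ₃(1⊗1)·b*` and
`Ψ_n(1⊗a₁⊗⋯⊗a_n⊗1) = t_{n−1}(a₁·Ψ_{n−1}(1⊗a₂⊗⋯⊗a_n⊗1))`. -/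
theorem stmt_10 (k : Type) [Field k] [IsAlgClosed k] [CharP k 2]
    (bb : Module.Basis (Fin 8) k (A k)) (hbb : ∀ i, bb i = mon k i) :
    -- Ψ₃(Φ₃(1⊗1)) = 1⊗1
    (psi3 bb (x k) (x k) (x k)
      + rm k (y k) (psi3 bb (x k) (y k) (x k))
      + psi3 bb (x k) (y k * x k) (y k)
      + psi3 bb (y k) (y k) (y k)
      + rm k (x k) (psi3 bb (y k) (x k) (y k))
      + psi3 bb (y k) (x k * y k) (x k)
      = (1 : A k) ⊗ₜ[k] (1 : A k)) ∧
    -- Ψ₄(Φ₄(1⊗1)) = 1⊗1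
    ((∑ i ∈ Finset.univ.erase (0 : Fin 8),
        (rm k (dm k i) (psi4 bb (mon k i) (x k) (x k) (x k))
          + rm k (y k * dm k i) (psi4 bb (mon k i) (x k) (y k) (x k))
          + rm k (dm k i) (psi4 bb (mon k i) (x k) (y k * x k) (y k))
          + rm k (dm k i) (psi4 bb (mon k i) (y k) (y k) (y k))
          + rm k (x k * dm k i) (psi4 bb (mon k i) (y k) (x k) (y k))
          + rm k (dm k i) (psi4 bb (mon k i) (y k) (x k * y k) (x k))))
      = (1 : A k) ⊗ₜ[k] (1 : A k)) :=
  stmt_10_general k bb hbb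
end
end

section
/- Let u₁, u₁' ∈ Hom_{A^e}(P_1, A) be the bimodule maps with u₁(1⊗x⊗1) = 1+xy, u₁(1⊗y⊗1) = x and u₁'(1⊗x⊗1) = y, u₁'(1⊗y⊗1) = 1+yx. Then Σ_{b∈B∖{1}} ⟨u₁(C(b)), 1⟩·b* = 0 and Σ_{b∈B∖{1}} ⟨u₁'(C(b)), 1⟩·b* = 0 in A; that is, the Tradler operator satisfies Δ(u₁) = Δ(u₁') = 0 in Hom_{A^e}(P_0, A) ≅ A. -/
open scoped TensorProduct
open MulOpposite

noncomputable section

open QP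

/-! In characteristic 2 the defining relations say `x² = yxy` and `y² = xyx`, and together
with `x⁴ = y⁴ = 0` they give a terminating rewriting system taking every word in `x, y` to one of
the normal words `1, x, y, x², xy, yx, y², x³`, the last one being the socle element
`xyxy = x³`. Rewriting the values `u(C(b))` of the two cocycles on the seven nonconstant basis
monomials shows that each is a sum of basis monomials other than `xyxy` (a few terms cancel in
pairs). Hence every coefficient `⟨u(C(b)), 1⟩` vanishes, and so does `Δ(u)`. -/

theorem add_self_eq_zero_of_charTwo (k : Type*) {M : Type*} [Ring k] [CharP k 2]
    [AddCommGroup M] [Module k M] (a : M) : a + a = 0 := by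
  rw [← two_smul k a, CharTwo.two_eq_zero, zero_smul]

theorem add_add_self_eq_of_charTwo (k : Type*) {M : Type*} [Ring k] [CharP k 2]
    [AddCommGroup M] [Module k M] (a b : M) : a + (a + b) = b := by
  rw [← add_assoc, add_self_eq_zero_of_charTwo k, zero_add]

theorem eq_of_add_eq_zero_of_charTwo (k : Type*) {M : Type*} [Ring k] [CharP k 2]
    [AddCommGroup M] [Module k M] {a b : M} (h : a + b = 0) : a = b := by
  rw [← add_right_inj b, add_self_eq_zero_of_charTwo k b, add_comm, h]

theorem eq_pow_mul_mul_pow_of_eq_mul_mul {M : Type*} [Monoid M] {a b w : M}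
    (h : w = b * w * a) (n : ℕ) : w = b ^ n * w * a ^ n := by
  induction n with
  | zero => simp
  | succ n ih =>
    calc w = b ^ n * (b * w * a) * a ^ n := by rw [← h, ← ih]
      _ = b ^ (n + 1) * w * a ^ (n + 1) := by
          rw [pow_succ b, pow_succ' a]; simp only [mul_assoc]

theorem mul_mul_mul_eq_of_eq {M : Type*} [Semigroup M] {a b c d : M} (h : a * b * c = d)
    (w : M) : w * a * b * c = w * d := by
  rw [mul_assoc w, mul_assoc w, h]

/-- The relations of `kQ₈`, with `x² + yxy = 0` written as `x² = yxy` as in characteristic 2. -/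
structure IsQ8Pair {R : Type*} [Semiring R] (a b : R) : Prop where
  mul_self_left : a * a = b * a * b
  mul_self_right : b * b = a * b * a
  pow_four_left : a ^ 4 = 0
  pow_four_right : b ^ 4 = 0

namespace IsQ8Pair

variable {R : Type*} [Semiring R] {a b : R}

theorem symm (h : IsQ8Pair a b) : IsQ8Pair b a :=
  ⟨h.mul_self_right, h.mul_self_left, h.pow_four_right, h.pow_four_left⟩

theorem mul_self_mul_eq_zero (h : IsQ8Pair a b) : a * a * b = 0 := by
  -- `a²b` is fixed by `w ↦ b w a`, so it equals `b⁴ (a²b) a⁴ = 0`.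
  have hfix : a * a * b = b * (a * a * b) * a :=
    calc a * a * b = b * a * (b * b) := by rw [h.mul_self_left, mul_assoc]
      _ = b * (a * a * b) * a := by rw [h.mul_self_right]; simp only [mul_assoc]
  rw [eq_pow_mul_mul_pow_of_eq_mul_mul hfix 4, h.pow_four_right, zero_mul, zero_mul]

theorem mul_mul_self_eq_zero (h : IsQ8Pair a b) : a * b * b = 0 :=
  calc a * b * b = a * a * b * a := by rw [mul_assoc, h.mul_self_right]; simp only [mul_assoc]
    _ = 0 := by rw [h.mul_self_mul_eq_zero, zero_mul]

theorem cube_right_eq_cube_left (h : IsQ8Pair a b) : b * b * b = a * a * a :=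
  calc b * b * b = b * a * b * a := by rw [mul_assoc, h.mul_self_right]; simp only [mul_assoc]
    _ = a * a * a := by rw [← h.mul_self_left]

theorem mul_self_mul_self_eq_zero (h : IsQ8Pair a b) : a * a * a * a = 0 := by
  rw [← h.pow_four_left, pow_succ, pow_three, ← mul_assoc]

/-- The rewriting rules to the normal words `1, a, b, a², ab, ba, b², a³`. -/
theorem reduce (h : IsQ8Pair a b) :
    b * a * b = a * a ∧ a * b * a = b * b ∧ b * b * b = a * a * a ∧
      a * a * b = 0 ∧ b * b * a = 0 ∧ a * b * b = 0 ∧ b * a * a = 0 ∧ a * a * a * a = 0 :=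
  ⟨h.mul_self_left.symm, h.mul_self_right.symm, h.cube_right_eq_cube_left,
    h.mul_self_mul_eq_zero, h.symm.mul_self_mul_eq_zero, h.mul_mul_self_eq_zero,
    h.symm.mul_mul_self_eq_zero, h.mul_self_mul_self_eq_zero⟩

/-- `IsQ8Pair.reduce` at the end of a left-associated product. -/
theorem reduce_mul_left (h : IsQ8Pair a b) (w : R) :
    w * b * a * b = w * (a * a) ∧ w * a * b * a = w * (b * b) ∧
      w * b * b * b = w * (a * a * a) ∧ w * a * a * b = 0 ∧ w * b * b * a = 0 ∧
      w * a * b * b = 0 ∧ w * b * a * a = 0 ∧ w * a * a * a * a = 0 := by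
  obtain ⟨h₁, h₂, h₃, h₄, h₅, h₆, h₇, h₈⟩ := h.reduce
  refine ⟨mul_mul_mul_eq_of_eq h₁ w, mul_mul_mul_eq_of_eq h₂ w, mul_mul_mul_eq_of_eq h₃ w,
    (mul_mul_mul_eq_of_eq h₄ w).trans (mul_zero w), (mul_mul_mul_eq_of_eq h₅ w).trans (mul_zero w),
    (mul_mul_mul_eq_of_eq h₆ w).trans (mul_zero w), (mul_mul_mul_eq_of_eq h₇ w).trans (mul_zero w),
    ?_⟩
  simp only [mul_assoc] at h₈ ⊢
  rw [h₈, mul_zero]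

end IsQ8Pair

namespace QP

variable {k : Type*} [Field k]

theorem bimap_tmul (c a b : A k) : bimap k c (a ⊗ₜ b) = a * c * b := by
  simp [bimap, two, mulm]

theorem pairc_apply (c₁ c₂ : A k) (p : PP k) :
    pairc k c₁ c₂ p = bimap k c₁ p.1 + bimap k c₂ p.2 := rfl

theorem repr_mon {bb : Module.Basis (Fin 8) k (A k)} (hbb : ∀ i, bb i = mon k i) (i : Fin 8) :
    bb.repr (mon k i) = Finsupp.single i 1 := by
  rw [← hbb, bb.repr_self]

theorem sum_bform_smul_dm_eq_zero (bb : Module.Basis (Fin 8) k (A k)) (f : PP k →ₗ[k] A k)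
    (hf : ∀ i, bb.repr (f (Cm k i)) 7 = 0) :
    ∑ i ∈ Finset.univ.erase (0 : Fin 8), bform bb (f (Cm k i)) 1 • dm k i = 0 :=
  Finset.sum_eq_zero fun i _ => by rw [bform, mul_one, hf, zero_smul]

variable [CharP k 2]

theorem isQ8Pair_x_y : IsQ8Pair (x k) (y k) := by
  have rel : ∀ {u v}, QRel k u v →
      RingQuot.mkAlgHom k (QRel k) u = RingQuot.mkAlgHom k (QRel k) v :=
    RingQuot.mkAlgHom_rel k
  refine ⟨eq_of_add_eq_zero_of_charTwo k ?_, eq_of_add_eq_zero_of_charTwo k ?_, ?_, ?_⟩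
  · simpa [x, y] using rel QRel.rx
  · simpa [x, y] using rel QRel.ry
  · simpa [x, y] using rel QRel.x4
  · simpa [x, y] using rel QRel.y4

theorem pairc_apply_Cm :
    (∀ i, pairc k (1 + x k * y k) (x k) (Cm k i) =
      ![0, mon k 0 + mon k 3, mon k 1, mon k 2 + mon k 6, mon k 2, mon k 3 + mon k 4, mon k 5,
        mon k 6] i) ∧
    (∀ i, pairc k (y k) (1 + y k * x k) (Cm k i) =
      ![0, mon k 2, mon k 0 + mon k 4, mon k 1, mon k 1 + mon k 5, mon k 6, mon k 3 + mon k 4,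
        mon k 5] i) := by
  constructor <;> intro i <;> fin_cases i <;>
    simp [Cm, mon, pairc_apply, bimap_tmul, mul_add, add_mul, ← mul_assoc, isQ8Pair_x_y.reduce,
      isQ8Pair_x_y.reduce_mul_left, add_assoc, add_comm, add_left_comm,
      add_self_eq_zero_of_charTwo k, add_add_self_eq_of_charTwo k]

end QP

theorem stmt_13_general (k : Type) [Field k] [CharP k 2]
    (bb : Module.Basis (Fin 8) k (A k)) (hbb : ∀ i, bb i = mon k i) :
    (∑ i ∈ Finset.univ.erase (0 : Fin 8),
      bform bb (pairc k (1 + x k * y k) (x k) (Cm k i)) 1 • dm k i) = 0 ∧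
    (∑ i ∈ Finset.univ.erase (0 : Fin 8),
      bform bb (pairc k (y k) (1 + y k * x k) (Cm k i)) 1 • dm k i) = 0 := by
  obtain ⟨hu₁, hu₁'⟩ := pairc_apply_Cm (k := k)
  constructor <;> refine sum_bform_smul_dm_eq_zero bb _ fun i => ?_
  · rw [hu₁]
    fin_cases i <;> simp [repr_mon hbb]
  · rw [hu₁']
    fin_cases i <;> simp [repr_mon hbb]

/-- For the 1-cocycles `u₁ = (1+xy, x)` and `u₁' = (y, 1+yx)` in
`Hom_{A^e}(P₁, A)`, the Tradler operator
`Δ(f) = Σ_{b∈B∖{1}} ⟨f(C(b)), 1⟩·b*` vanishes: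
`Δ(u₁) = Δ(u₁') = 0` in `Hom_{A^e}(P₀, A) ≅ A`. -/
theorem stmt_13 (k : Type) [Field k] [IsAlgClosed k] [CharP k 2]
    (bb : Module.Basis (Fin 8) k (A k)) (hbb : ∀ i, bb i = mon k i) :
    (∑ i ∈ Finset.univ.erase (0 : Fin 8),
      bform bb (pairc k (1 + x k * y k) (x k) (Cm k i)) 1 • dm k i) = 0 ∧
    (∑ i ∈ Finset.univ.erase (0 : Fin 8),
      bform bb (pairc k (y k) (1 + y k * x k) (Cm k i)) 1 • dm k i) = 0 :=
  stmt_13_general k bb hbb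
end
end
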